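/- arXiv:0812.1030 — 3 statements merged into one kernel-verified Lean document; each statement's English description precedes it below -/
import Mathlib

section
/- Fix k₀ > 0, b₀ > 0, and a positive integer l. For N a positive integer define ρ₀ = N/(2π), a₀² = k₀/ρ₀², and let s⁺(N) be the larger root of s² + b₀ s + a₀² l²/4 = 0 (defined when b₀² ≥ a₀² l²). Then N² · s⁺(N) → -π² k₀ l² / b₀ as N → ∞. In particular, the least stable eigenvalue (l = 1) decays to zero as O(1/N²). -/
open Real Filter Topology

/- Rationalising, `N² s⁺(N) = -N² ε / (2 (√(b₀² - ε) + b₀))` with `ε = k₀ (2π/N)² l²`.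
Since `N² ε = 4π² k₀ l²` and `√(b₀² - ε) → b₀`, the limit is `-4π² k₀ l² / (4 b₀)`. -/

theorem neg_add_sqrt_sq_sub_eq_neg_div {b x : ℝ} (hb : 0 ≤ b) (hx : x ≤ b ^ 2) :
    -b + √(b ^ 2 - x) = -x / (√(b ^ 2 - x) + b) := by
  have hsq : √(b ^ 2 - x) ^ 2 = b ^ 2 - x := sq_sqrt (by linarith)
  rcases (add_nonneg (sqrt_nonneg (b ^ 2 - x)) hb).eq_or_lt with hzero | hpos
  · have hs : √(b ^ 2 - x) = 0 := by linarith [sqrt_nonneg (b ^ 2 - x)]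
    have hb0 : b = 0 := by linarith
    have hx0 : x = 0 := by rw [hs, hb0] at hsq; linarith
    simp [hb0, hx0]
  · rw [eq_div_iff hpos.ne']
    linear_combination hsq

/-- The larger root `(-b + √(b² - ε)) / 2` of `s² + b s + ε / 4` is `-ε / (4b) + o(ε)`. -/
theorem tendsto_mul_neg_add_sqrt_sq_sub_div_two {α : Type*} {l : Filter α} {g ε : α → ℝ}
    {b c : ℝ} (hb : 0 < b) (hε : Tendsto ε l (𝓝 0))
    (hgε : Tendsto (fun t => g t * ε t) l (𝓝 c)) :
    Tendsto (fun t => g t * ((-b + √(b ^ 2 - ε t)) / 2)) l (𝓝 (-c / (4 * b))) := by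
  have hsqrt : Tendsto (fun t => √(b ^ 2 - ε t)) l (𝓝 b) := by
    have := ((tendsto_const_nhds (x := b ^ 2)).sub hε).sqrt
    rwa [sub_zero, sqrt_sq hb.le] at this
  have hlim : Tendsto (fun t => -(g t * ε t) / (2 * (√(b ^ 2 - ε t) + b))) l
      (𝓝 (-c / (2 * (b + b)))) :=
    hgε.neg.div ((hsqrt.add_const b).const_mul 2) (by positivity)
  have hsmall : ∀ᶠ t in l, ε t ≤ b ^ 2 := hε.eventually (ge_mem_nhds (by positivity))
  convert hlim.congr' (hsmall.mono fun t ht => ?_) using 2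
  · ring
  · rw [neg_add_sqrt_sq_sub_eq_neg_div hb.le ht, mul_comm 2, ← div_div, mul_div_assoc']
    ring

theorem least_stable_eigenvalue_decay_DD_general (k₀ b₀ : ℝ) (hb : 0 < b₀)
    (l : ℕ) :
    Filter.Tendsto
      (fun N : ℕ =>
        (N : ℝ)^2 *
          ((-b₀ + Real.sqrt (b₀^2 - (k₀ * (2 * π / N)^2) * (l : ℝ)^2)) / 2))
      Filter.atTop (nhds (-(π^2 * k₀ * (l : ℝ)^2 / b₀))) := by
  have hε : Tendsto (fun N : ℕ => k₀ * (2 * π / N) ^ 2 * (l : ℝ) ^ 2) atTop (𝓝 0) := by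
    simpa using ((tendsto_const_div_atTop_nhds_zero_nat (2 * π)).pow 2
      |>.const_mul k₀).mul_const ((l : ℝ) ^ 2)
  have hNε : Tendsto (fun N : ℕ => (N : ℝ) ^ 2 * (k₀ * (2 * π / N) ^ 2 * (l : ℝ) ^ 2)) atTop
      (𝓝 (k₀ * (2 * π) ^ 2 * (l : ℝ) ^ 2)) := by
    refine tendsto_const_nhds.congr' ((eventually_ne_atTop 0).mono fun N hN => ?_)
    field_simp
  convert tendsto_mul_neg_add_sqrt_sq_sub_div_two hb hε hNε using 2
  field_simp
  ring

theorem least_stable_eigenvalue_decay_DD (k₀ b₀ : ℝ) (hk : 0 < k₀) (hb : 0 < b₀)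
    (l : ℕ) (hl : 0 < l) :
    Filter.Tendsto
      (fun N : ℕ =>
        (N : ℝ)^2 *
          ((-b₀ + Real.sqrt (b₀^2 - (k₀ * (2 * π / N)^2) * (l : ℝ)^2)) / 2))
      Filter.atTop (nhds (-(π^2 * k₀ * (l : ℝ)^2 / b₀))) :=
  least_stable_eigenvalue_decay_DD_general k₀ b₀ hb l
end

section
/- Fix k₀ > 0, b₀ > 0, and a positive integer l. For N a positive integer define ρ₀ = N/(2π), a₀² = k₀/ρ₀², and let s⁺(N) be the larger root of s² + b₀ s + a₀² (2l-1)²/16 = 0 (defined when the discriminant is nonnegative). Then N² · s⁺(N) → -π² k₀ (2l-1)² / (4 b₀) as N → ∞. -/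
/-!
With `t = 1 / N²`, the quantity `N² · s⁺(N)` is half the difference quotient at `t = 0` of
`t ↦ √(b₀² - c t)`, where `c = π² k₀ (2l-1)²`, since `s⁺ = (-b₀ + √(b₀² - c / N²)) / 2`.
As `N → ∞` it tends to half the derivative `-c / (2 b₀)`.
-/

open Real Filter Topology

lemma hasDerivAt_sqrt_sq_sub_mul {b : ℝ} (hb : 0 < b) (c : ℝ) :
    HasDerivAt (fun t => √(b ^ 2 - c * t)) (-c / (2 * b)) 0 := by
  have h := (((hasDerivAt_id (0 : ℝ)).const_mul c).const_sub (b ^ 2)).sqrt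
    (by simp [hb.ne'])
  simpa [Real.sqrt_sq hb.le] using h

lemma tendsto_inv_sq_atTop_nhdsNE_zero :
    Tendsto (fun x : ℝ => (x ^ 2)⁻¹) atTop (𝓝[≠] 0) :=
  (tendsto_inv_atTop_nhdsGT_zero.comp (tendsto_pow_atTop two_ne_zero)).mono_right
    (nhdsWithin_mono _ fun _ hx => ne_of_gt hx)

lemma tendsto_sq_mul_larger_root {b : ℝ} (hb : 0 < b) (c : ℝ) :
    Tendsto (fun x : ℝ => x ^ 2 * ((-b + √(b ^ 2 - c / x ^ 2)) / 2)) atTop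
      (𝓝 (-(c / (4 * b)))) := by
  have slope := (hasDerivAt_iff_tendsto_slope_zero.mp (hasDerivAt_sqrt_sq_sub_mul hb c)).comp
    tendsto_inv_sq_atTop_nhdsNE_zero
  convert slope.div_const 2 using 1
  · ext x
    simp only [Function.comp_apply, smul_eq_mul, inv_inv, zero_add, mul_zero, sub_zero,
      Real.sqrt_sq hb.le, div_eq_mul_inv]
    ring
  · ring_nf

theorem least_stable_eigenvalue_decay_ND_general (k₀ b₀ : ℝ) (hb : 0 < b₀)
    (l : ℕ) :
    Filter.Tendsto
      (fun N : ℕ =>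
        (N : ℝ)^2 *
          ((-b₀ + Real.sqrt (b₀^2 - (k₀ * (2 * π / N)^2) * (2 * l - 1 : ℝ)^2 / 4)) / 2))
      Filter.atTop (nhds (-(π^2 * k₀ * (2 * l - 1 : ℝ)^2 / (4 * b₀)))) := by
  convert (tendsto_sq_mul_larger_root hb (π ^ 2 * k₀ * (2 * l - 1) ^ 2)).comp
    tendsto_natCast_atTop_atTop using 1
  ext N
  simp only [Function.comp_apply]
  ring_nf

theorem least_stable_eigenvalue_decay_ND (k₀ b₀ : ℝ) (hk : 0 < k₀) (hb : 0 < b₀)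
    (l : ℕ) (hl : 0 < l) :
    Filter.Tendsto
      (fun N : ℕ =>
        (N : ℝ)^2 *
          ((-b₀ + Real.sqrt (b₀^2 - (k₀ * (2 * π / N)^2) * (2 * l - 1 : ℝ)^2 / 4)) / 2))
      Filter.atTop (nhds (-(π^2 * k₀ * (2 * l - 1 : ℝ)^2 / (4 * b₀)))) :=
  least_stable_eigenvalue_decay_ND_general k₀ b₀ hb l
end

section
/- Let N ≥ 1, b₀ > 0, k₀ > 0, and let A_{L-F} be the 2N×2N block matrix [[0, I], [-k₀(M + Mᵀ), -b₀ I]] where M is the N×N bidiagonal matrix with 1 on the diagonal and -1 on the superdiagonal. Then every eigenvalue of A_{L-F} has negative real part, and the sum of all 2N eigenvalues equals -N b₀. -/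
open Matrix Complex

/-- The `N×N` upper bidiagonal matrix with `1` on the diagonal and `-1` on the
superdiagonal, over `ℂ`. -/
def MmatC (N : ℕ) : Matrix (Fin N) (Fin N) ℂ :=
  Matrix.of fun i j => if j = i then 1 else if (j : ℕ) = (i : ℕ) + 1 then -1 else 0

/-!
If `(x, y)` is an eigenvector of `[[0, I], [-K, -b I]]` for the eigenvalue `s`, then `y = s x` and
`K x = -(s² + b s) x`; pairing with `x` gives `s² + b s + c = 0` with `c = x*Kx / x*x > 0` as soon as
`K` is positive definite, and such a root has negative real part. For `K = k₀ (M + Mᵀ)` positive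
definiteness comes from the summation by parts `2 Re x*Mx = |x₀|² + ∑ₙ |xₙ - xₙ₊₁|²` (with
`x_N = 0`), which vanishes only for `x = 0`. The trace of the block matrix is `-N b₀`.
-/

open scoped ComplexOrder ComplexConjugate

theorem Complex.re_neg_of_sq_add_mul_add_eq_zero {s c : ℂ} {b : ℝ} (hb : 0 < b) (hc : 0 < c)
    (h : s ^ 2 + b * s + c = 0) : s.re < 0 := by
  obtain ⟨hc_re, hc_im⟩ := Complex.pos_iff.mp hc
  have hre := congrArg Complex.re h
  have him := congrArg Complex.im h
  simp only [pow_two, add_re, add_im, mul_re, mul_im, ofReal_re, ofReal_im, zero_re,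
    zero_im] at hre him
  by_contra! hs
  have him_zero : s.im = 0 := by
    have : s.im * (2 * s.re + b) = 0 := by linarith
    exact (mul_eq_zero.mp this).resolve_right (by linarith)
  rw [him_zero] at hre
  nlinarith

section SecondOrder

variable {n : Type*} [Fintype n] [DecidableEq n]

theorem re_neg_of_fromBlocks_mulVec_eq_smul {K : Matrix n n ℂ} (hK : K.PosDef) {b : ℝ}
    (hb : 0 < b) {s : ℂ} {v : n ⊕ n → ℂ} (hv : v ≠ 0)
    (h : fromBlocks 0 1 (-K) (-((b : ℂ) • 1)) *ᵥ v = s • v) : s.re < 0 := by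
  obtain ⟨x, y, rfl⟩ : ∃ x y, v = Sum.elim x y := ⟨_, _, (Sum.elim_comp_inl_inr v).symm⟩
  rw [fromBlocks_mulVec] at h
  have hy : y = s • x := by
    ext i; simpa using congrFun h (Sum.inl i)
  have hKx : K *ᵥ x = -(s ^ 2 + b * s) • x := by
    ext i
    have hi := congrFun h (Sum.inr i)
    simp only [Sum.elim_comp_inl, Sum.elim_comp_inr, hy, Sum.elim_inr, Pi.add_apply, Pi.smul_apply,
      neg_mulVec, smul_mulVec, mulVec_smul, one_mulVec, Pi.neg_apply, smul_eq_mul] at hi ⊢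
    linear_combination -hi
  have hx : x ≠ 0 := by
    rintro rfl
    exact hv (by simp [hy])
  have hp := hK.dotProduct_mulVec_pos hx
  have hq : 0 < star x ⬝ᵥ x := dotProduct_star_self_pos_iff.mpr hx
  rw [hKx, dotProduct_smul, smul_eq_mul] at hp
  refine Complex.re_neg_of_sq_add_mul_add_eq_zero hb (div_pos hp hq) ?_
  field_simp [hq.ne']
  ring

end SecondOrder

theorem Matrix.star_dotProduct_add_conjTranspose_mulVec {n : Type*} [Fintype n]
    (A : Matrix n n ℂ) (x : n → ℂ) :
    star x ⬝ᵥ ((A + Aᴴ) *ᵥ x) = (2 * (star x ⬝ᵥ (A *ᵥ x)).re : ℝ) := by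
  rw [add_mulVec, dotProduct_add, mulVec_conjTranspose, star_dotProduct_star,
    ← dotProduct_mulVec, ← add_conj]
  rfl

theorem Complex.two_mul_re_conj_mul_sub (a b : ℂ) :
    2 * (conj a * (a - b)).re = normSq a - normSq b + normSq (a - b) := by
  simp only [normSq_apply, mul_re, conj_re, conj_im, sub_re, sub_im]
  ring

section ExtendByZero

variable {α : Type*} [Zero α] {N : ℕ}

def extendByZero (x : Fin N → α) (n : ℕ) : α :=
  if h : n < N then x ⟨n, h⟩ else 0

@[simp]
theorem extendByZero_val (x : Fin N → α) (i : Fin N) : extendByZero x i = x i := by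
  simp [extendByZero]

theorem extendByZero_of_le (x : Fin N → α) {n : ℕ} (hn : N ≤ n) : extendByZero x n = 0 :=
  dif_neg hn.not_gt

theorem eq_zero_of_extendByZero_zero_of_forall_eq_succ {x : Fin N → α}
    (h0 : extendByZero x 0 = 0) (hsucc : ∀ n < N, extendByZero x n = extendByZero x (n + 1)) :
    x = 0 := by
  have hall : ∀ n, extendByZero x n = 0 := by
    intro n
    induction n with
    | zero => exact h0
    | succ m ih =>
      rcases lt_or_ge m N with hm | hm
      · rw [← hsucc m hm, ih]
      · exact extendByZero_of_le x (by omega)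
  funext i
  rw [← extendByZero_val x i, hall, Pi.zero_apply]

end ExtendByZero

theorem MmatC_conjTranspose (N : ℕ) : (MmatC N)ᴴ = (MmatC N)ᵀ := by
  ext i j
  simp only [conjTranspose_apply, transpose_apply, MmatC, of_apply]
  split_ifs <;> simp

theorem MmatC_mulVec_apply {N : ℕ} (x : Fin N → ℂ) (i : Fin N) :
    (MmatC N *ᵥ x) i = extendByZero x i - extendByZero x (i + 1) := by
  have hentry : ∀ j : Fin N, MmatC N i j * x j =
      (if (j : ℕ) = i then extendByZero x j else 0) -
        (if (j : ℕ) = i + 1 then extendByZero x j else 0) := by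
    intro j
    simp only [MmatC, of_apply, extendByZero_val, Fin.val_inj]
    split_ifs <;> simp_all
  rw [mulVec, dotProduct, Finset.sum_congr rfl fun j _ => hentry j,
    Fin.sum_univ_eq_sum_range (fun n => (if n = i then extendByZero x n else 0) -
      (if n = i + 1 then extendByZero x n else 0)),
    Finset.sum_sub_distrib, Finset.sum_ite_eq', Finset.sum_ite_eq',
    if_pos (Finset.mem_range.mpr i.is_lt)]
  split_ifs with h
  · rfl
  · rw [extendByZero_of_le x (n := i + 1) (by simpa using h)]

theorem two_mul_re_star_dotProduct_MmatC_mulVec {N : ℕ} (x : Fin N → ℂ) :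
    2 * (star x ⬝ᵥ (MmatC N *ᵥ x)).re = normSq (extendByZero x 0) +
      ∑ n ∈ Finset.range N, normSq (extendByZero x n - extendByZero x (n + 1)) := by
  have hsum : star x ⬝ᵥ (MmatC N *ᵥ x) = ∑ n ∈ Finset.range N,
      conj (extendByZero x n) * (extendByZero x n - extendByZero x (n + 1)) := by
    rw [dotProduct, ← Fin.sum_univ_eq_sum_range]
    simp [MmatC_mulVec_apply]
  rw [hsum, re_sum, Finset.mul_sum, Finset.sum_congr rfl fun n _ => two_mul_re_conj_mul_sub _ _,
    Finset.sum_add_distrib, Finset.sum_range_sub' (fun n => normSq (extendByZero x n)),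
    extendByZero_of_le x le_rfl, map_zero, sub_zero]

theorem posDef_MmatC_add_transpose (N : ℕ) : (MmatC N + (MmatC N)ᵀ).PosDef := by
  rw [← MmatC_conjTranspose]
  refine .of_dotProduct_mulVec_pos (isHermitian_add_transpose_self _) fun x hx => ?_
  rw [star_dotProduct_add_conjTranspose_mulVec, zero_lt_real,
    two_mul_re_star_dotProduct_MmatC_mulVec]
  by_contra! hle
  have hsteps := Finset.sum_nonneg fun n (_ : n ∈ Finset.range N) =>
    normSq_nonneg (extendByZero x n - extendByZero x (n + 1))
  obtain ⟨h0, hsum⟩ := (add_eq_zero_iff_of_nonneg (normSq_nonneg _) hsteps).mp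
    (le_antisymm hle (add_nonneg (normSq_nonneg _) hsteps))
  refine hx (eq_zero_of_extendByZero_zero_of_forall_eq_succ (normSq_eq_zero.mp h0) fun n hn => ?_)
  rw [← sub_eq_zero, ← normSq_eq_zero]
  exact (Finset.sum_eq_zero_iff_of_nonneg fun m _ => normSq_nonneg _).mp hsum n
    (Finset.mem_range.mpr hn)

theorem Matrix.trace_fromBlocks {m n α : Type*} [Fintype m] [Fintype n] [AddCommMonoid α]
    (A : Matrix m m α) (B : Matrix m n α) (C : Matrix n m α) (D : Matrix n n α) :
    (fromBlocks A B C D).trace = A.trace + D.trace := by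
  simp [trace, Fintype.sum_sum_type]

theorem closed_loop_stable_and_trace_general (N : ℕ) (b₀ k₀ : ℝ)
    (hb : 0 < b₀) (hk : 0 < k₀) :
    let A : Matrix (Fin N ⊕ Fin N) (Fin N ⊕ Fin N) ℂ :=
      Matrix.fromBlocks 0 1 (-((k₀ : ℂ) • (MmatC N + (MmatC N)ᵀ))) (-((b₀ : ℂ) • 1))
    (∀ s : ℂ, (∃ v : Fin N ⊕ Fin N → ℂ, v ≠ 0 ∧ A.mulVec v = s • v) → s.re < 0) ∧
    A.charpoly.roots.sum = -(N : ℂ) * b₀ := by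
  intro A
  refine ⟨fun s ⟨v, hv, hAv⟩ => ?_, ?_⟩
  · have hK := (posDef_MmatC_add_transpose N).smul (zero_lt_real.mpr hk)
    exact re_neg_of_fromBlocks_mulVec_eq_smul hK hb hv hAv
  · rw [← trace_eq_sum_roots_charpoly, trace_fromBlocks]
    simp [trace_neg, trace_smul, mul_comm]

theorem closed_loop_stable_and_trace (N : ℕ) (hN : 1 ≤ N) (b₀ k₀ : ℝ)
    (hb : 0 < b₀) (hk : 0 < k₀) :
    let A : Matrix (Fin N ⊕ Fin N) (Fin N ⊕ Fin N) ℂ :=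
      Matrix.fromBlocks 0 1 (-((k₀ : ℂ) • (MmatC N + (MmatC N)ᵀ))) (-((b₀ : ℂ) • 1))
    (∀ s : ℂ, (∃ v : Fin N ⊕ Fin N → ℂ, v ≠ 0 ∧ A.mulVec v = s • v) → s.re < 0) ∧
    A.charpoly.roots.sum = -(N : ℂ) * b₀ :=
  closed_loop_stable_and_trace_general N b₀ k₀ hb hk
end
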